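/- arXiv:1110.5848 — 2 statements merged into one kernel-verified Lean document; each statement's English description precedes it below -/
import Mathlib

section
/- The direct sum A ⊕ B of two zero product determined K-algebras (A, μ) and (B, λ), with multiplication (a₁,b₁)(a₂,b₂) = (a₁a₂, b₁b₂), is zero product determined; conversely, if A ⊕ B is zero product determined then so are both A and B. -/
open TensorProduct

/-- The set of pure tensors killed by the multiplication map. -/
def zeroTensors {K A : Type*} [CommRing K] [AddCommGroup A] [Module K A]
    (μ : TensorProduct K A A →ₗ[K] A) : Set (TensorProduct K A A) :=
  {t | ∃ a b : A, t = a ⊗ₜ[K] b ∧ μ (a ⊗ₜ[K] b) = 0}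

/-- An algebra `(A, μ)` is zero product determined iff the kernel of `μ` is
spanned by the pure tensors it contains. -/
def IsZPD {K A : Type*} [CommRing K] [AddCommGroup A] [Module K A]
    (μ : TensorProduct K A A →ₗ[K] A) : Prop :=
  LinearMap.ker μ = Submodule.span K (zeroTensors μ)

/-!
If `f : A → C` and `g : C → A` are multiplicative with `g ∘ f = id` and `C` is zero product
determined, so is `A`: an element `t` of `ker μ` is sent by `f ⊗ f` into `ker ν`, hence into the
span of the zero pure tensors of `C`, and `g ⊗ g` carries it back to `t` inside the span of the zero
pure tensors of `A`. Both factors are such retracts of `A × B`.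

Conversely, a tensor in `(A × B) ⊗ (A × B)` is the sum of its `A ⊗ A`, `A ⊗ B`, `B ⊗ A` and `B ⊗ B`
components. The mixed ones are spanned by the zero pure tensors `(a, 0) ⊗ (0, b)` and
`(0, b) ⊗ (a, 0)`, while for an element of `ker ν` the other two lie in `ker μ` and `ker λ`.
-/

section Transfer

variable {K A C : Type*} [CommRing K] [AddCommGroup A] [Module K A] [AddCommGroup C] [Module K C]
  {μ : A ⊗[K] A →ₗ[K] A} {ν : C ⊗[K] C →ₗ[K] C}

theorem span_zeroTensors_le_ker (μ : A ⊗[K] A →ₗ[K] A) :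
    Submodule.span K (zeroTensors μ) ≤ LinearMap.ker μ :=
  Submodule.span_le.mpr fun _ ⟨_, _, ht, h0⟩ => ht ▸ h0

theorem isZPD_iff_ker_le_span :
    IsZPD μ ↔ LinearMap.ker μ ≤ Submodule.span K (zeroTensors μ) :=
  ⟨le_of_eq, fun h => h.antisymm (span_zeroTensors_le_ker μ)⟩

theorem comp_map_eq_comp_of_tmul {f : A →ₗ[K] C}
    (hf : ∀ a b, ν (f a ⊗ₜ f b) = f (μ (a ⊗ₜ b))) :
    ν ∘ₗ TensorProduct.map f f = f ∘ₗ μ :=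
  TensorProduct.ext' fun a b => by simpa using hf a b

theorem map_mem_span_zeroTensors {f : A →ₗ[K] C}
    (hf : ∀ a b, ν (f a ⊗ₜ f b) = f (μ (a ⊗ₜ b))) {t : A ⊗[K] A}
    (ht : t ∈ Submodule.span K (zeroTensors μ)) :
    TensorProduct.map f f t ∈ Submodule.span K (zeroTensors ν) := by
  rw [← Submodule.mem_comap]
  refine Submodule.span_le.mpr ?_ ht
  rintro _ ⟨a, b, rfl, h0⟩
  exact Submodule.subset_span ⟨f a, f b, TensorProduct.map_tmul f f a b, by rw [hf, h0, map_zero]⟩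

theorem IsZPD.of_retract (hν : IsZPD ν) (f : A →ₗ[K] C) (g : C →ₗ[K] A)
    (hgf : g ∘ₗ f = LinearMap.id)
    (hf : ∀ a b, ν (f a ⊗ₜ f b) = f (μ (a ⊗ₜ b)))
    (hg : ∀ x y, μ (g x ⊗ₜ g y) = g (ν (x ⊗ₜ y))) : IsZPD μ := by
  refine isZPD_iff_ker_le_span.mpr fun t ht => ?_
  have hft : TensorProduct.map f f t ∈ LinearMap.ker ν := by
    rw [LinearMap.mem_ker, ← LinearMap.comp_apply, comp_map_eq_comp_of_tmul hf,
      LinearMap.comp_apply, LinearMap.mem_ker.mp ht, map_zero]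
  have hgft : TensorProduct.map g g (TensorProduct.map f f t) = t := by
    rw [← LinearMap.comp_apply, ← TensorProduct.map_comp, hgf, TensorProduct.map_id,
      LinearMap.id_apply]
  rw [hν] at hft
  simpa only [hgft] using map_mem_span_zeroTensors hg hft

theorem range_map_le_span_zeroTensors {M N : Type*} [AddCommGroup M] [Module K M]
    [AddCommGroup N] [Module K N] {f : M →ₗ[K] C} {g : N →ₗ[K] C}
    (h : ∀ m n, ν (f m ⊗ₜ g n) = 0) :
    LinearMap.range (TensorProduct.map f g) ≤ Submodule.span K (zeroTensors ν) := by
  rw [TensorProduct.range_map_eq_span_tmul]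
  exact Submodule.span_mono fun _ ⟨m, n, ht⟩ => ⟨f m, g n, ht.symm, h m n⟩

end Transfer

section Prod

variable {K A B : Type*} [CommRing K] [AddCommGroup A] [Module K A] [AddCommGroup B] [Module K B]
  {μ : A ⊗[K] A →ₗ[K] A} {lam : B ⊗[K] B →ₗ[K] B} {ν : (A × B) ⊗[K] (A × B) →ₗ[K] A × B}

open LinearMap in
theorem TensorProduct.id_prod_tensor_prod_eq_sum :
    (LinearMap.id : (A × B) ⊗[K] (A × B) →ₗ[K] _) =
      map (inl K A B) (inl K A B) ∘ₗ map (fst K A B) (fst K A B)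
      + map (inl K A B) (inr K A B) ∘ₗ map (fst K A B) (snd K A B)
      + map (inr K A B) (inl K A B) ∘ₗ map (snd K A B) (fst K A B)
      + map (inr K A B) (inr K A B) ∘ₗ map (snd K A B) (snd K A B) := by
  have hid : (LinearMap.id : A × B →ₗ[K] A × B) =
      inl K A B ∘ₗ fst K A B + inr K A B ∘ₗ snd K A B := by
    ext <;> simp
  simp only [← map_comp, ← map_id, hid, map_add_left, map_add_right]
  abel

def IsDirectSumMul (μ : A ⊗[K] A →ₗ[K] A) (lam : B ⊗[K] B →ₗ[K] B)
    (ν : (A × B) ⊗[K] (A × B) →ₗ[K] A × B) : Prop :=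
  ∀ a₁ a₂ b₁ b₂, ν ((a₁, b₁) ⊗ₜ (a₂, b₂)) = (μ (a₁ ⊗ₜ a₂), lam (b₁ ⊗ₜ b₂))

namespace IsDirectSumMul

open LinearMap

theorem inl_tmul_inl (hν : IsDirectSumMul μ lam ν) (a b : A) :
    ν (inl K A B a ⊗ₜ inl K A B b) = inl K A B (μ (a ⊗ₜ b)) := by
  simpa using hν a b 0 0

theorem inr_tmul_inr (hν : IsDirectSumMul μ lam ν) (a b : B) :
    ν (inr K A B a ⊗ₜ inr K A B b) = inr K A B (lam (a ⊗ₜ b)) := by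
  simpa using hν 0 0 a b

theorem inl_tmul_inr (hν : IsDirectSumMul μ lam ν) (a : A) (b : B) :
    ν (inl K A B a ⊗ₜ inr K A B b) = 0 := by
  simpa [Prod.zero_eq_mk] using hν a 0 0 b

theorem inr_tmul_inl (hν : IsDirectSumMul μ lam ν) (b : B) (a : A) :
    ν (inr K A B b ⊗ₜ inl K A B a) = 0 := by
  simpa [Prod.zero_eq_mk] using hν 0 a b 0

theorem fst_tmul_fst (hν : IsDirectSumMul μ lam ν) (x y : A × B) :
    μ (fst K A B x ⊗ₜ fst K A B y) = fst K A B (ν (x ⊗ₜ y)) := by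
  simp [hν x.1 y.1 x.2 y.2]

theorem snd_tmul_snd (hν : IsDirectSumMul μ lam ν) (x y : A × B) :
    lam (snd K A B x ⊗ₜ snd K A B y) = snd K A B (ν (x ⊗ₜ y)) := by
  simp [hν x.1 y.1 x.2 y.2]

theorem isZPD_fst (hν : IsDirectSumMul μ lam ν) (h : IsZPD ν) : IsZPD μ :=
  h.of_retract (inl K A B) (fst K A B) (fst_comp_inl K A B) hν.inl_tmul_inl hν.fst_tmul_fst

theorem isZPD_snd (hν : IsDirectSumMul μ lam ν) (h : IsZPD ν) : IsZPD lam :=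
  h.of_retract (inr K A B) (snd K A B) (snd_comp_inr K A B) hν.inr_tmul_inr hν.snd_tmul_snd

theorem isZPD (hν : IsDirectSumMul μ lam ν) (hμ : IsZPD μ) (hlam : IsZPD lam) : IsZPD ν := by
  refine isZPD_iff_ker_le_span.mpr fun t ht => ?_
  have hA : TensorProduct.map (fst K A B) (fst K A B) t ∈ Submodule.span K (zeroTensors μ) := by
    rw [← hμ, mem_ker, ← comp_apply, comp_map_eq_comp_of_tmul hν.fst_tmul_fst, comp_apply,
      mem_ker.mp ht, map_zero]
  have hB : TensorProduct.map (snd K A B) (snd K A B) t ∈ Submodule.span K (zeroTensors lam) := by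
    rw [← hlam, mem_ker, ← comp_apply, comp_map_eq_comp_of_tmul hν.snd_tmul_snd, comp_apply,
      mem_ker.mp ht, map_zero]
  rw [← id_apply (R := K) t, TensorProduct.id_prod_tensor_prod_eq_sum]
  refine add_mem (add_mem (add_mem ?_ ?_) ?_) ?_
  · exact map_mem_span_zeroTensors hν.inl_tmul_inl hA
  · exact range_map_le_span_zeroTensors hν.inl_tmul_inr (mem_range_self _ _)
  · exact range_map_le_span_zeroTensors hν.inr_tmul_inl (mem_range_self _ _)
  · exact map_mem_span_zeroTensors hν.inr_tmul_inr hB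

end IsDirectSumMul

end Prod

theorem binary_direct_sum_zpd {K A B : Type*} [CommRing K]
    [AddCommGroup A] [Module K A] [AddCommGroup B] [Module K B]
    (μ : TensorProduct K A A →ₗ[K] A) (lam : TensorProduct K B B →ₗ[K] B)
    (ν : TensorProduct K (A × B) (A × B) →ₗ[K] A × B)
    (hν : ∀ (a₁ a₂ : A) (b₁ b₂ : B),
      ν ((a₁, b₁) ⊗ₜ (a₂, b₂)) = (μ (a₁ ⊗ₜ a₂), lam (b₁ ⊗ₜ b₂))) :
    IsZPD ν ↔ IsZPD μ ∧ IsZPD lam :=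
  have hν : IsDirectSumMul μ lam ν := hν
  ⟨fun h => ⟨hν.isZPD_fst h, hν.isZPD_snd h⟩, fun ⟨hμ, hlam⟩ => hν.isZPD hμ hlam⟩
end

section
/- If (A, μ) is a K-algebra in which a₁a₂ = 0 implies a₁ = 0 or a₂ = 0 (e.g., A is an integral domain), then the set of pure tensors in ker μ is {0}; hence A is zero product determined if and only if μ : A ⊗ A → A is injective. -/
open TensorProduct

section

variable {K A : Type*} [CommRing K] [AddCommGroup A] [Module K A]
  (μ : TensorProduct K A A →ₗ[K] A)

theorem zero_mem_zeroTensors : (0 : A ⊗[K] A) ∈ zeroTensors μ :=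
  ⟨0, 0, (zero_tmul A 0).symm, by simp⟩

theorem zeroTensors_eq_singleton_zero (hnzd : ∀ a b : A, μ (a ⊗ₜ b) = 0 → a = 0 ∨ b = 0) :
    zeroTensors μ = {0} := by
  refine Set.eq_singleton_iff_unique_mem.mpr ⟨zero_mem_zeroTensors μ, ?_⟩
  rintro _ ⟨a, b, rfl, hab⟩
  rcases hnzd a b hab with rfl | rfl
  · exact zero_tmul A b
  · exact tmul_zero A a

theorem isZPD_iff_injective_of_zeroTensors_subset (h : zeroTensors μ ⊆ {0}) :
    IsZPD μ ↔ Function.Injective μ := by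
  rw [IsZPD, Submodule.span_eq_bot.mpr h, LinearMap.ker_eq_bot]

end

theorem no_zero_divisors_zpd_iff_injective {K A : Type*} [CommRing K]
    [AddCommGroup A] [Module K A]
    (μ : TensorProduct K A A →ₗ[K] A)
    (hnzd : ∀ a b : A, μ (a ⊗ₜ b) = 0 → a = 0 ∨ b = 0) :
    zeroTensors μ = {0} ∧ (IsZPD μ ↔ Function.Injective μ) := by
  have hzero := zeroTensors_eq_singleton_zero μ hnzd
  exact ⟨hzero, isZPD_iff_injective_of_zeroTensors_subset μ hzero.subset⟩
end
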